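/- Let D ≥ 2 and let (a_n)_{n∈ι} and (b_m)_{m∈κ} be orthonormal families of unit vectors in ℂ^D with ι and κ nonempty. Let (σ_n)_{n∈ι} and (ρ_m)_{m∈κ} be families of D×D density matrices such that for all n ∈ ι, m ∈ κ, and every unitary D×D matrix U: ⟨a_n, U* ρ_m U a_n⟩ = ⟨b_m, U σ_n U* b_m⟩. Then there exists a single real number α with −1/(D−1) ≤ α ≤ 1 such that σ_n = (1−α)/D · 1 + α·|a_n⟩⟨a_n| for every n and ρ_m = (1−α)/D · 1 + α·|b_m⟩⟨b_m| for every m. -/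

import Mathlib

open Matrix
open scoped ComplexOrder

namespace Crooks17

variable {D : ℕ}

lemma quad_conj (A B : Matrix (Fin D) (Fin D) ℂ) (x : Fin D → ℂ) :
    star x ⬝ᵥ ((Aᴴ * B * A) *ᵥ x) = star (A *ᵥ x) ⬝ᵥ (B *ᵥ (A *ᵥ x)) := by
  rw [mul_assoc, ← Matrix.mulVec_mulVec, Matrix.dotProduct_mulVec,
    ← Matrix.star_mulVec, ← Matrix.mulVec_mulVec]

lemma mulVec_cancel {A : Matrix (Fin D) (Fin D) ℂ} (h : Aᴴ * A = 1) (x : Fin D → ℂ) :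
    Aᴴ *ᵥ (A *ᵥ x) = x := by
  rw [Matrix.mulVec_mulVec, h, Matrix.one_mulVec]

lemma quad_norm {A : Matrix (Fin D) (Fin D) ℂ} (h : Aᴴ * A = 1) (x : Fin D → ℂ) :
    star (A *ᵥ x) ⬝ᵥ (A *ᵥ x) = star x ⬝ᵥ x := by
  have := quad_conj A 1 x
  rw [mul_one, h, Matrix.one_mulVec, Matrix.one_mulVec] at this
  exact this.symm

end Crooks17

namespace Crooks17

variable {D : ℕ}

/-- standard basis vector -/
def ev (D : ℕ) (i : Fin D) : Fin D → ℂ := Pi.single i 1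

lemma quad_entry (C : Matrix (Fin D) (Fin D) ℂ) (i j : Fin D) (p q : ℂ) :
    star (p • ev D i + q • ev D j) ⬝ᵥ (C *ᵥ (p • ev D i + q • ev D j)) =
    (starRingEnd ℂ) p * p * C i i + (starRingEnd ℂ) p * q * C i j
      + (starRingEnd ℂ) q * p * C j i + (starRingEnd ℂ) q * q * C j j := by
  simp [ev, Matrix.mulVec_add, Matrix.mulVec_smul, dotProduct_add, star_add, star_smul,
    add_dotProduct, smul_dotProduct, dotProduct_smul,
    Matrix.mulVec_single, single_dotProduct, smul_eq_mul, ← Pi.single_star,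
    Pi.single_apply]
  ring

end Crooks17
namespace Crooks17
variable {D : ℕ}

lemma dot_self_real (x : Fin D → ℂ) :
    star x ⬝ᵥ x = ((∑ k, Complex.normSq (x k) : ℝ) : ℂ) := by
  simp [dotProduct, Complex.normSq_eq_conj_mul_self]

lemma quad_zero_all (C : Matrix (Fin D) (Fin D) ℂ)
    (h : ∀ x : Fin D → ℂ, star x ⬝ᵥ x = 1 → star x ⬝ᵥ (C *ᵥ x) = 0)
    (x : Fin D → ℂ) : star x ⬝ᵥ (C *ᵥ x) = 0 := by
  set r : ℝ := ∑ k, Complex.normSq (x k) with hr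
  have hr0 : 0 ≤ r := Finset.sum_nonneg fun k _ => Complex.normSq_nonneg _
  rcases eq_or_lt_of_le hr0 with hz | hpos
  · have hx : x = 0 := by
      funext k
      have := (Finset.sum_eq_zero_iff_of_nonneg
        (fun k _ => Complex.normSq_nonneg (x k))).1 hz.symm k (Finset.mem_univ k)
      exact Complex.normSq_eq_zero.mp this
    simp [hx]
  · set t : ℝ := (Real.sqrt r)⁻¹ with ht
    have hts : t ≠ 0 := by positivity
    have hunit : star ((t:ℂ) • x) ⬝ᵥ ((t:ℂ) • x) = 1 := by
      rw [star_smul, smul_dotProduct, dotProduct_smul, dot_self_real, ← hr,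
        smul_eq_mul, smul_eq_mul, Complex.star_def, Complex.conj_ofReal,
        ← Complex.ofReal_mul, ← Complex.ofReal_mul, Complex.ofReal_eq_one]
      rw [ht]
      field_simp
      rw [Real.sq_sqrt hr0]
    have := h _ hunit
    rw [Matrix.mulVec_smul, star_smul, smul_dotProduct, dotProduct_smul,
      smul_eq_mul, smul_eq_mul, Complex.star_def, Complex.conj_ofReal] at this
    have htc : (t:ℂ) ≠ 0 := Complex.ofReal_ne_zero.mpr hts
    rcases mul_eq_zero.mp this with h' | h'
    · exact absurd h' htc
    rcases mul_eq_zero.mp h' with h'' | h''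
    · exact absurd h'' htc
    · exact h''

end Crooks17
namespace Crooks17
variable {D : ℕ}

lemma ev_unit (i : Fin D) : star (ev D i) ⬝ᵥ ev D i = 1 := by
  simp [ev, ← Pi.single_star, single_dotProduct, Pi.single_apply]

lemma polarization (C : Matrix (Fin D) (Fin D) ℂ)
    (h : ∀ x : Fin D → ℂ, star x ⬝ᵥ x = 1 → star x ⬝ᵥ (C *ᵥ x) = 0) : C = 0 := by
  have hall := quad_zero_all C h
  have hdiag : ∀ i, C i i = 0 := by
    intro i
    have h1 := (quad_entry C i i 1 0).symm.trans (hall _)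
    simpa using h1
  ext i j
  rcases eq_or_ne i j with rfl | hij
  · simpa using hdiag i
  · have h1 : C i j + C j i = 0 := by
      have := (quad_entry C i j 1 1).symm.trans (hall _)
      simpa [hdiag] using this
    have h2 : C i j - C j i = 0 := by
      have := (quad_entry C i j 1 Complex.I).symm.trans (hall _)
      simp only [hdiag, Complex.conj_I, _root_.map_one, one_mul, mul_one, mul_zero, zero_mul,
        add_zero, zero_add, neg_mul] at this
      have h3 : Complex.I * (C i j - C j i) = 0 := by linear_combination this
      rcases mul_eq_zero.mp h3 with h | h
      · exact absurd h Complex.I_ne_zero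
      · exact h
    have := add_add_sub_cancel (C i j) (C i j) (C j i)
    simp only [Matrix.zero_apply]
    linear_combination (h1 + h2) / 2

end Crooks17
namespace Crooks17
variable {D : ℕ}

lemma exists_unitary_col (i0 : Fin D) (u : Fin D → ℂ) (hu : star u ⬝ᵥ u = 1) :
    ∃ V : Matrix (Fin D) (Fin D) ℂ, Vᴴ * V = 1 ∧ V * Vᴴ = 1 ∧ (∀ i, V i i0 = u i) := by
  classical
  set E := EuclideanSpace ℂ (Fin D)
  set u' : E := (WithLp.equiv 2 _).symm u with hu'
  have hcard : Module.finrank ℂ E = Fintype.card (Fin D) := by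
    simp [E, finrank_euclideanSpace]
  have horth : Orthonormal ℂ (({i0} : Set (Fin D)).restrict fun _ => u') := by
    rw [orthonormal_iff_ite]
    intro p q
    have hpq : p = q := Subtype.ext (by rw [Set.mem_singleton_iff.mp p.2,
      Set.mem_singleton_iff.mp q.2])
    subst hpq
    simp only [if_pos rfl, Set.restrict_apply]
    rw [hu']
    change u ⬝ᵥ star u = 1
    rw [dotProduct_comm]
    exact hu
  obtain ⟨B, hB⟩ := Orthonormal.exists_orthonormalBasis_extension_of_card_eq hcard horth
  have hB0 : B i0 = u' := hB i0 rfl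
  refine ⟨Matrix.of fun i j => B j i, ?_, ?_, ?_⟩
  · ext j k
    have := orthonormal_iff_ite.mp B.orthonormal j k
    rw [EuclideanSpace.inner_eq_star_dotProduct] at this
    simpa [Matrix.mul_apply, Matrix.conjTranspose_apply, Matrix.one_apply,
      dotProduct, mul_comm] using this
  · rw [mul_eq_one_comm]
    ext j k
    have := orthonormal_iff_ite.mp B.orthonormal j k
    rw [EuclideanSpace.inner_eq_star_dotProduct] at this
    simpa [Matrix.mul_apply, Matrix.conjTranspose_apply, Matrix.one_apply,
      dotProduct, mul_comm] using this
  · intro i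
    show B i0 i = u i
    rw [hB0]
    rfl

lemma exists_unitary_mapsto {u w : Fin D → ℂ} (i0 : Fin D)
    (hu : star u ⬝ᵥ u = 1) (hw : star w ⬝ᵥ w = 1) :
    ∃ U : Matrix (Fin D) (Fin D) ℂ, Uᴴ * U = 1 ∧ U * Uᴴ = 1 ∧ U *ᵥ u = w := by
  obtain ⟨V, hV1, hV2, hVc⟩ := exists_unitary_col i0 u hu
  obtain ⟨W, hW1, hW2, hWc⟩ := exists_unitary_col i0 w hw
  have hVe : V *ᵥ ev D i0 = u := by
    funext i
    simp [ev, Matrix.mulVec_single, hVc i]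
  have hWe : W *ᵥ ev D i0 = w := by
    funext i
    simp [ev, Matrix.mulVec_single, hWc i]
  refine ⟨W * Vᴴ, ?_, ?_, ?_⟩
  · rw [Matrix.conjTranspose_mul, Matrix.conjTranspose_conjTranspose, mul_assoc,
      ← mul_assoc Wᴴ, hW1, one_mul, hV2]
  · rw [Matrix.conjTranspose_mul, Matrix.conjTranspose_conjTranspose, mul_assoc,
      ← mul_assoc Vᴴ, hV1, one_mul, hW2]
  · rw [← Matrix.mulVec_mulVec, ← hVe, mulVec_cancel hV1, hWe]

end Crooks17
namespace Crooks17
variable {D : ℕ}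

/-- permutation matrix -/
def pmat (e : Equiv.Perm (Fin D)) : Matrix (Fin D) (Fin D) ℂ :=
  Matrix.of fun p q => if q = e p then 1 else 0

lemma pmat_mul (e : Equiv.Perm (Fin D)) (M : Matrix (Fin D) (Fin D) ℂ) :
    pmat e * M = Matrix.of fun p q => M (e p) q := by
  ext p q
  simp [pmat, Matrix.mul_apply, ite_mul, Finset.sum_ite_eq']

lemma mul_pmat (M : Matrix (Fin D) (Fin D) ℂ) (e : Equiv.Perm (Fin D)) :
    M * pmat e = Matrix.of fun p q => M p (e.symm q) := by
  ext p q
  have : ∀ k : Fin D, q = e k ↔ k = e.symm q := by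
    intro k; constructor
    · intro h; simp [h]
    · intro h; simp [h]
  simp only [pmat, Matrix.mul_apply, Matrix.of_apply, mul_ite, mul_one, mul_zero]
  rw [Finset.sum_congr rfl fun k _ => by rw [if_congr (this k) rfl rfl]]
  simp

lemma pmat_conjT (e : Equiv.Perm (Fin D)) : (pmat e)ᴴ = pmat e.symm := by
  ext p q
  have : p = e q ↔ q = e.symm p := by
    constructor
    · intro h; simp [h]
    · intro h; simp [h]
  simp only [pmat, Matrix.conjTranspose_apply, Matrix.of_apply]
  rw [if_congr this rfl rfl]
  split <;> simp

lemma pmat_unitary (e : Equiv.Perm (Fin D)) : (pmat e)ᴴ * pmat e = 1 := by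
  rw [pmat_conjT, pmat_mul]
  ext p q
  simp [Matrix.one_apply, pmat, Equiv.eq_symm_apply (α := Fin D)]
  split <;> simp_all [eq_comm]

lemma pmat_mulVec (e : Equiv.Perm (Fin D)) (x : Fin D → ℂ) :
    pmat e *ᵥ x = fun p => x (e p) := by
  funext p
  simp [pmat, Matrix.mulVec, dotProduct, ite_mul, Finset.sum_ite_eq']

/-- sign-flip diagonal vector -/
def sgn (D : ℕ) (j0 : Fin D) : Fin D → ℂ := fun k => if k = j0 then -1 else 1

lemma sgn_star (j0 : Fin D) : star (sgn D j0) = sgn D j0 := by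
  funext k
  by_cases h : k = j0 <;> simp [sgn, h]

lemma sgn_mul_self (j0 : Fin D) (k : Fin D) : sgn D j0 k * sgn D j0 k = 1 := by
  by_cases h : k = j0 <;> simp [sgn, h]

lemma sgn_unitary (j0 : Fin D) :
    (Matrix.diagonal (sgn D j0))ᴴ * Matrix.diagonal (sgn D j0) = 1 := by
  rw [Matrix.diagonal_conjTranspose, sgn_star, Matrix.diagonal_mul_diagonal]
  ext i j
  by_cases h : i = j
  · subst h; simp [Matrix.diagonal_apply_eq, sgn_mul_self, Matrix.one_apply_eq]
  · simp [Matrix.diagonal_apply_ne _ h, Matrix.one_apply_ne h]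

end Crooks17
namespace Crooks17
variable {D : ℕ}

lemma col_mulVec {V : Matrix (Fin D) (Fin D) ℂ} {u : Fin D → ℂ} {i0 : Fin D}
    (h : ∀ i, V i i0 = u i) : V *ᵥ ev D i0 = u := by
  funext i
  simp [ev, Matrix.mulVec_single, h i]

lemma pmat_unitary' (e : Equiv.Perm (Fin D)) : pmat e * (pmat e)ᴴ = 1 := by
  rw [mul_eq_one_comm]
  exact pmat_unitary e

lemma vecMulVec_mulVec (b w : Fin D → ℂ) :
    vecMulVec b (star b) *ᵥ w = (star b ⬝ᵥ w) • b := by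
  funext i
  simp [Matrix.mulVec, Matrix.vecMulVec_apply, dotProduct, Finset.mul_sum,
    mul_comm, mul_assoc, mul_left_comm]

lemma quad_form (β γ : ℂ) (b v w : Fin D → ℂ) :
    star v ⬝ᵥ ((β • 1 + γ • vecMulVec b (star b)) *ᵥ w) =
      β * (star v ⬝ᵥ w) + γ * ((star b ⬝ᵥ w) * (star v ⬝ᵥ b)) := by
  rw [Matrix.add_mulVec, Matrix.smul_mulVec, Matrix.smul_mulVec,
    Matrix.one_mulVec, vecMulVec_mulVec, dotProduct_add]
  simp [dotProduct_smul, smul_eq_mul, mul_assoc]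

lemma invariant_form (hD : 2 ≤ D) (b : Fin D → ℂ)
    (hbu : star b ⬝ᵥ b = 1) (ρ : Matrix (Fin D) (Fin D) ℂ)
    (H : ∀ V : Matrix (Fin D) (Fin D) ℂ, Vᴴ * V = 1 → V * Vᴴ = 1 →
      V *ᵥ b = b → Vᴴ *ᵥ b = b → Vᴴ * ρ * V = ρ) :
    ∃ β γ : ℂ, ρ = β • 1 + γ • vecMulVec b (star b) ∧
      (∀ v : Fin D → ℂ, star v ⬝ᵥ v = 1 → star b ⬝ᵥ v = 0 → star v ⬝ᵥ (ρ *ᵥ v) = β) ∧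
      star b ⬝ᵥ (ρ *ᵥ b) = β + γ := by
  classical
  have hD0 : 0 < D := by omega
  set i0 : Fin D := ⟨0, by omega⟩ with hi0
  set i1 : Fin D := ⟨1, by omega⟩ with hi1
  have hi01 : i0 ≠ i1 := by simp [hi0, hi1, Fin.ext_iff]
  obtain ⟨W, hW1, hW2, hWc⟩ := exists_unitary_col i0 b hbu
  have hWe : W *ᵥ ev D i0 = b := col_mulVec hWc
  set ρ' : Matrix (Fin D) (Fin D) ℂ := Wᴴ * ρ * W with hρ'
  -- transported invariance
  have H' : ∀ V' : Matrix (Fin D) (Fin D) ℂ, V'ᴴ * V' = 1 → V' * V'ᴴ = 1 →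
      V' *ᵥ ev D i0 = ev D i0 → V'ᴴ *ᵥ ev D i0 = ev D i0 → V'ᴴ * ρ' * V' = ρ' := by
    intro V' h1 h2 h3 h4
    set V : Matrix (Fin D) (Fin D) ℂ := W * V' * Wᴴ with hV
    have hVH : Vᴴ = W * V'ᴴ * Wᴴ := by
      simp [hV, Matrix.conjTranspose_mul, mul_assoc]
    have hWb : Wᴴ *ᵥ b = ev D i0 := by
      rw [← hWe, mulVec_cancel hW1]
    have hu1 : Vᴴ * V = 1 := by
      rw [hVH, hV]
      calc W * V'ᴴ * Wᴴ * (W * V' * Wᴴ) = W * (V'ᴴ * (Wᴴ * W) * V') * Wᴴ := by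
            simp only [mul_assoc]
        _ = 1 := by rw [hW1, mul_one, h1, mul_one, hW2]
    have hu2 : V * Vᴴ = 1 := by
      rw [hVH, hV]
      calc W * V' * Wᴴ * (W * V'ᴴ * Wᴴ) = W * (V' * (Wᴴ * W) * V'ᴴ) * Wᴴ := by
            simp only [mul_assoc]
        _ = 1 := by rw [hW1, mul_one, h2, mul_one, hW2]
    have hm1 : V *ᵥ b = b := by
      rw [hV, ← Matrix.mulVec_mulVec, ← Matrix.mulVec_mulVec, hWb, h3, hWe]
    have hm2 : Vᴴ *ᵥ b = b := by
      rw [hVH, ← Matrix.mulVec_mulVec, ← Matrix.mulVec_mulVec, hWb, h4, hWe]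
    have := H V hu1 hu2 hm1 hm2
    calc V'ᴴ * ρ' * V'
        = (Wᴴ * W) * (V'ᴴ * (Wᴴ * ρ * W) * V') * (Wᴴ * W) := by
          rw [hW1, one_mul, mul_one, ← hρ']
      _ = Wᴴ * (Vᴴ * ρ * V) * W := by rw [hVH, hV]; simp only [mul_assoc]
      _ = ρ' := by rw [this, hρ']
  -- off-diagonal entries of ρ' vanish
  have hoffd : ∀ i j, i ≠ j → ρ' i j = 0 := by
    intro i j hij
    set j0 : Fin D := if i = i0 then j else i with hj0
    have hj00 : j0 ≠ i0 := by
      rcases eq_or_ne i i0 with h | h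
      · simp only [hj0, if_pos h]
        rw [← h]
        exact hij.symm
      · simpa [hj0, if_neg h] using h
    have hone : sgn D j0 i * sgn D j0 j = -1 := by
      rcases eq_or_ne i i0 with h | h
      · have h1 : i ≠ j0 := by rw [h]; exact hj00.symm
        have h2 : j = j0 := by simp [hj0, if_pos h]
        simp [sgn, if_neg h1, if_pos h2]
      · have h2 : i = j0 := by simp [hj0, if_neg h]
        have h1 : j ≠ j0 := by rw [← h2]; exact hij.symm
        simp [sgn, if_pos h2, if_neg h1]
    have hcT : (Matrix.diagonal (sgn D j0))ᴴ = Matrix.diagonal (sgn D j0) := by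
      rw [Matrix.diagonal_conjTranspose, sgn_star]
    have hfix : Matrix.diagonal (sgn D j0) *ᵥ ev D i0 = ev D i0 := by
      funext k
      rcases eq_or_ne k i0 with rfl | hk
      · simp [Matrix.mulVec_diagonal, ev, sgn, if_neg hj00.symm]
      · simp [Matrix.mulVec_diagonal, ev, Pi.single_eq_of_ne hk]
    have hinv := H' (Matrix.diagonal (sgn D j0)) (sgn_unitary j0)
      (by have h := sgn_unitary j0; rw [hcT] at h; rw [hcT]; exact h)
      hfix (by rw [hcT]; exact hfix)
    have hent := congrFun (congrFun hinv i) j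
    rw [hcT] at hent
    have : sgn D j0 i * ρ' i j * sgn D j0 j = ρ' i j := by
      rw [Matrix.mul_diagonal, Matrix.diagonal_mul] at hent
      exact hent
    have h2 : (sgn D j0 i * sgn D j0 j) * ρ' i j = ρ' i j := by
      linear_combination this
    rw [hone] at h2
    linear_combination h2 / (-2)
  -- diagonal entries for indices ≠ i0 agree
  have hdiagEq : ∀ i, i ≠ i0 → ρ' i i = ρ' i1 i1 := by
    intro i hi
    rcases eq_or_ne i i1 with rfl | hne
    · rfl
    set e := Equiv.swap i i1 with he
    have hesymm : e.symm = e := by rw [he, Equiv.symm_swap]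
    have he0 : e i0 = i0 := Equiv.swap_apply_of_ne_of_ne (Ne.symm hi) hi01
    have hfix : pmat e *ᵥ ev D i0 = ev D i0 := by
      rw [pmat_mulVec]
      funext p
      rcases eq_or_ne p i0 with rfl | hp
      · rw [he0]
      · have hep : e p ≠ i0 := fun h => hp (e.injective (by rw [h, he0]))
        simp [ev, Pi.single_eq_of_ne hep, Pi.single_eq_of_ne hp]
    have hfixT : (pmat e)ᴴ *ᵥ ev D i0 = ev D i0 := by
      rw [pmat_conjT, hesymm]
      exact hfix
    have hinv := H' (pmat e) (pmat_unitary e) (pmat_unitary' e) hfix hfixT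
    have hent := congrFun (congrFun hinv i1) i1
    rw [pmat_conjT, hesymm, mul_pmat, pmat_mul] at hent
    simp only [Matrix.of_apply, hesymm] at hent
    rw [← hent, he, Equiv.swap_apply_right]
  set c : ℂ := ρ' i0 i0 with hc
  set d : ℂ := ρ' i1 i1 with hd
  have hρ'form : ρ' = d • (1 : Matrix (Fin D) (Fin D) ℂ)
      + (c - d) • vecMulVec (ev D i0) (star (ev D i0)) := by
    ext i j
    rcases eq_or_ne i j with rfl | hij
    · rcases eq_or_ne i i0 with rfl | hi
      · simp only [Matrix.add_apply, Matrix.smul_apply, Matrix.one_apply_eq,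
          Matrix.vecMulVec_apply, ev, ← Pi.single_star, star_one, Pi.single_eq_same, smul_eq_mul]
        ring
      · simp only [Matrix.add_apply, Matrix.smul_apply, Matrix.one_apply_eq,
          Matrix.vecMulVec_apply, ev, ← Pi.single_star, Pi.single_eq_of_ne hi, smul_eq_mul]
        rw [hdiagEq i hi]
        ring
    · simp only [Matrix.add_apply, Matrix.smul_apply, Matrix.one_apply_ne hij,
        Matrix.vecMulVec_apply, ev, ← Pi.single_star, smul_eq_mul, hoffd i j hij]
      rcases eq_or_ne i i0 with rfl | hi
      · have hj : j ≠ i0 := hij.symm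
        rw [Pi.single_eq_of_ne hj]
        ring
      · rw [Pi.single_eq_of_ne hi]
        ring
  have hρeq : ρ = W * ρ' * Wᴴ := by
    have h1 : W * (Wᴴ * ρ * W) * Wᴴ = (W * Wᴴ) * ρ * (W * Wᴴ) := by
      simp only [mul_assoc]
    rw [hρ', h1, hW2, one_mul, mul_one]
  have hWE : W * vecMulVec (ev D i0) (star (ev D i0))
      = Matrix.of (fun i k => ev D i0 k * W i i0) := by
    ext i k
    simp only [Matrix.mul_apply, Matrix.vecMulVec_apply, ev, ← Pi.single_star, star_one,
      Pi.single_apply, mul_ite, ite_mul, mul_one, one_mul, mul_zero, zero_mul,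
      Finset.sum_ite_eq', Finset.mem_univ, if_true, Matrix.of_apply]
    split <;> simp
  have hkey : W * vecMulVec (ev D i0) (star (ev D i0)) * Wᴴ = vecMulVec b (star b) := by
    rw [hWE]
    ext i j
    simp only [Matrix.mul_apply, Matrix.of_apply, ev, Pi.single_apply, ite_mul, one_mul,
      zero_mul, mul_ite, mul_zero, Matrix.conjTranspose_apply, Finset.sum_ite_eq',
      Finset.mem_univ, if_true, Matrix.vecMulVec_apply]
    rw [hWc i, hWc j]
    rfl
  refine ⟨d, c - d, ?_, ?_, ?_⟩
  · rw [hρeq, hρ'form, Matrix.mul_add, Matrix.add_mul, Matrix.mul_smul, Matrix.smul_mul,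
      Matrix.mul_smul, Matrix.smul_mul, mul_one, hW2, hkey]
  · intro v hv hbv
    rw [hρeq, hρ'form, Matrix.mul_add, Matrix.add_mul, Matrix.mul_smul, Matrix.smul_mul,
      Matrix.mul_smul, Matrix.smul_mul, mul_one, hW2, hkey, quad_form, hv, hbv]
    ring
  · rw [hρeq, hρ'form, Matrix.mul_add, Matrix.add_mul, Matrix.mul_smul, Matrix.smul_mul,
      Matrix.mul_smul, Matrix.smul_mul, mul_one, hW2, hkey, quad_form, hbu]
    ring

end Crooks17
namespace Crooks17
variable {D : ℕ}

lemma dot_conj (x y : Fin D → ℂ) : star x ⬝ᵥ y = (starRingEnd ℂ) (star y ⬝ᵥ x) := by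
  simp [dotProduct, map_sum, mul_comm]

lemma exists_perp (hD : 2 ≤ D) {u : Fin D → ℂ} (hu : star u ⬝ᵥ u = 1) :
    ∃ v : Fin D → ℂ, star v ⬝ᵥ v = 1 ∧ star u ⬝ᵥ v = 0 := by
  have hD0 : 0 < D := by omega
  set i0 : Fin D := ⟨0, by omega⟩ with hi0
  set i1 : Fin D := ⟨1, by omega⟩ with hi1
  have hi01 : i0 ≠ i1 := by simp [hi0, hi1, Fin.ext_iff]
  obtain ⟨W, hW1, hW2, hWc⟩ := exists_unitary_col i0 u hu
  refine ⟨fun i => W i i1, ?_, ?_⟩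
  · have := congrFun (congrFun hW1 i1) i1
    rw [Matrix.one_apply_eq] at this
    rw [← this]
    simp [Matrix.mul_apply, Matrix.conjTranspose_apply, dotProduct]
  · have := congrFun (congrFun hW1 i0) i1
    rw [Matrix.one_apply_ne hi01] at this
    rw [← this]
    simp only [Matrix.mul_apply, Matrix.conjTranspose_apply, dotProduct, Pi.star_apply]
    exact Finset.sum_congr rfl fun k _ => by rw [hWc k]

lemma trace_form (β γ : ℂ) (b : Fin D → ℂ) (hbu : star b ⬝ᵥ b = 1) :
    (β • (1 : Matrix (Fin D) (Fin D) ℂ) + γ • vecMulVec b (star b)).trace = β * D + γ := by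
  rw [Matrix.trace_add, Matrix.trace_smul, Matrix.trace_smul, Matrix.trace_one]
  have h : (vecMulVec b (star b)).trace = star b ⬝ᵥ b := by
    simp [Matrix.trace, Matrix.diag, Matrix.vecMulVec_apply, dotProduct, mul_comm]
  rw [h, hbu]
  simp [smul_eq_mul]

end Crooks17

open Crooks17

/-- Main necessity result (CI) for the Crooks relation in the nondegenerate
finite-dimensional case: if the post-measurement states `σ_n`, `ρ_m` satisfy the detailed
balance condition `⟨a_n, U* ρ_m U a_n⟩ = ⟨b_m, U σ_n U* b_m⟩` for every unitary `U`, then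
there is a single `α ∈ [-1/(D-1), 1]` with `σ_n = (1-α)/D • 1 + α |a_n⟩⟨a_n|` and
`ρ_m = (1-α)/D • 1 + α |b_m⟩⟨b_m|`. -/
theorem stmt_17 {ι κ : Type*} [Nonempty ι] [Nonempty κ] [DecidableEq ι] [DecidableEq κ]
    (D : ℕ) (hD : 2 ≤ D)
    (a : ι → (Fin D → ℂ)) (b : κ → (Fin D → ℂ))
    (ha : ∀ n n' : ι, star (a n) ⬝ᵥ a n' = if n = n' then 1 else 0)
    (hb : ∀ m m' : κ, star (b m) ⬝ᵥ b m' = if m = m' then 1 else 0)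
    (σ : ι → Matrix (Fin D) (Fin D) ℂ) (ρ : κ → Matrix (Fin D) (Fin D) ℂ)
    (hσ : ∀ n, (σ n).PosSemidef) (hσtr : ∀ n, (σ n).trace = 1)
    (hρ : ∀ m, (ρ m).PosSemidef) (hρtr : ∀ m, (ρ m).trace = 1)
    (hdb : ∀ (n : ι) (m : κ) (U : Matrix (Fin D) (Fin D) ℂ), Uᴴ * U = 1 →
      star (a n) ⬝ᵥ (Uᴴ * ρ m * U) *ᵥ a n = star (b m) ⬝ᵥ (U * σ n * Uᴴ) *ᵥ b m) :
    ∃ α : ℝ, -(1 / ((D : ℝ) - 1)) ≤ α ∧ α ≤ 1 ∧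
      (∀ n, σ n = (((1 - α) / D : ℝ) : ℂ) • (1 : Matrix (Fin D) (Fin D) ℂ) +
          (α : ℂ) • vecMulVec (a n) (star (a n))) ∧
      (∀ m, ρ m = (((1 - α) / D : ℝ) : ℂ) • (1 : Matrix (Fin D) (Fin D) ℂ) +
          (α : ℂ) • vecMulVec (b m) (star (b m))) := by
  classical
  have hD0 : 0 < D := by omega
  set i0 : Fin D := ⟨0, by omega⟩ with hi0
  have hau : ∀ n, star (a n) ⬝ᵥ a n = 1 := fun n => by simpa using ha n n
  have hbu : ∀ m, star (b m) ⬝ᵥ b m = 1 := fun m => by simpa using hb m m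
  obtain ⟨n0⟩ := ‹Nonempty ι›
  obtain ⟨m0⟩ := ‹Nonempty κ›
  -- invariance of ρ m under unitaries fixing b m
  have Hρ : ∀ m, ∀ V : Matrix (Fin D) (Fin D) ℂ, Vᴴ * V = 1 → V * Vᴴ = 1 →
      V *ᵥ b m = b m → Vᴴ *ᵥ b m = b m → Vᴴ * ρ m * V = ρ m := by
    intro m V hV1 hV2 hVb hVHb
    have key : ∀ x : Fin D → ℂ, star x ⬝ᵥ x = 1 →
        star x ⬝ᵥ ((Vᴴ * ρ m * V - ρ m) *ᵥ x) = 0 := by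
      intro x hx
      obtain ⟨U, hU1, hU2, hUa⟩ := exists_unitary_mapsto i0 (hau n0) hx
      have hVU1 : (V * U)ᴴ * (V * U) = 1 := by
        rw [Matrix.conjTranspose_mul]
        calc Uᴴ * Vᴴ * (V * U) = Uᴴ * (Vᴴ * V) * U := by simp only [mul_assoc]
          _ = 1 := by rw [hV1, mul_one, hU1]
      have h1 := hdb n0 m U hU1
      have h2 := hdb n0 m (V * U) hVU1
      have hR : star (b m) ⬝ᵥ ((V * U * σ n0 * (V * U)ᴴ) *ᵥ b m)
          = star (b m) ⬝ᵥ ((U * σ n0 * Uᴴ) *ᵥ b m) := by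
        have e1 : V * U * σ n0 * (V * U)ᴴ = (Vᴴ)ᴴ * (U * σ n0 * Uᴴ) * Vᴴ := by
          rw [Matrix.conjTranspose_mul, Matrix.conjTranspose_conjTranspose]
          simp only [mul_assoc]
        rw [e1, quad_conj, hVHb]
      have hL : star (a n0) ⬝ᵥ (((V * U)ᴴ * ρ m * (V * U)) *ᵥ a n0)
          = star (a n0) ⬝ᵥ ((Uᴴ * ρ m * U) *ᵥ a n0) := by
        rw [h2, hR, ← h1]
      have e2 : (V * U)ᴴ * ρ m * (V * U) = Uᴴ * (Vᴴ * ρ m * V) * U := by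
        rw [Matrix.conjTranspose_mul]
        simp only [mul_assoc]
      rw [e2, quad_conj U (Vᴴ * ρ m * V), quad_conj U (ρ m), hUa] at hL
      rw [Matrix.sub_mulVec, dotProduct_sub, hL, sub_self]
    have := polarization _ key
    exact sub_eq_zero.mp this
  -- invariance of σ n under unitaries fixing a n
  have Hσpre : ∀ n, ∀ V : Matrix (Fin D) (Fin D) ℂ, Vᴴ * V = 1 → V * Vᴴ = 1 →
      V *ᵥ a n = a n → Vᴴ *ᵥ a n = a n → V * σ n * Vᴴ = σ n := by
    intro n V hV1 hV2 hVa hVHa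
    have key : ∀ y : Fin D → ℂ, star y ⬝ᵥ y = 1 →
        star y ⬝ᵥ ((V * σ n * Vᴴ - σ n) *ᵥ y) = 0 := by
      intro y hy
      obtain ⟨U, hU1, hU2, hUy⟩ := exists_unitary_mapsto i0 hy (hbu m0)
      have hUb : Uᴴ *ᵥ b m0 = y := by rw [← hUy, mulVec_cancel hU1]
      have hUV1 : (U * V)ᴴ * (U * V) = 1 := by
        rw [Matrix.conjTranspose_mul]
        calc Vᴴ * Uᴴ * (U * V) = Vᴴ * (Uᴴ * U) * V := by simp only [mul_assoc]
          _ = 1 := by rw [hU1, mul_one, hV1]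
      have h1 := hdb n m0 U hU1
      have h2 := hdb n m0 (U * V) hUV1
      have hL : star (a n) ⬝ᵥ (((U * V)ᴴ * ρ m0 * (U * V)) *ᵥ a n)
          = star (a n) ⬝ᵥ ((Uᴴ * ρ m0 * U) *ᵥ a n) := by
        have e1 : (U * V)ᴴ * ρ m0 * (U * V) = Vᴴ * (Uᴴ * ρ m0 * U) * V := by
          rw [Matrix.conjTranspose_mul]
          simp only [mul_assoc]
        rw [e1, quad_conj, hVa]
      have hR : star (b m0) ⬝ᵥ ((U * V * σ n * (U * V)ᴴ) *ᵥ b m0)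
          = star (b m0) ⬝ᵥ ((U * σ n * Uᴴ) *ᵥ b m0) := by
        rw [← h2, ← h1, hL]
      have e2 : U * V * σ n * (U * V)ᴴ = (Uᴴ)ᴴ * (V * σ n * Vᴴ) * Uᴴ := by
        rw [Matrix.conjTranspose_mul, Matrix.conjTranspose_conjTranspose]
        simp only [mul_assoc]
      have e3 : U * σ n * Uᴴ = (Uᴴ)ᴴ * σ n * Uᴴ := by
        rw [Matrix.conjTranspose_conjTranspose]
      rw [e2, e3, quad_conj Uᴴ (V * σ n * Vᴴ), quad_conj Uᴴ (σ n), hUb] at hR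
      rw [Matrix.sub_mulVec, dotProduct_sub, hR, sub_self]
    have := polarization _ key
    exact sub_eq_zero.mp this
  have Hσ : ∀ n, ∀ V : Matrix (Fin D) (Fin D) ℂ, Vᴴ * V = 1 → V * Vᴴ = 1 →
      V *ᵥ a n = a n → Vᴴ *ᵥ a n = a n → Vᴴ * σ n * V = σ n := by
    intro n V h1 h2 h3 h4
    have := Hσpre n Vᴴ
      (by rw [Matrix.conjTranspose_conjTranspose]; exact h2)
      (by rw [Matrix.conjTranspose_conjTranspose]; exact h1)
      h4 (by rw [Matrix.conjTranspose_conjTranspose]; exact h3)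
    rwa [Matrix.conjTranspose_conjTranspose] at this
  choose βσ γσ hσform hσperp hσdiag using fun n => invariant_form hD (a n) (hau n) (σ n) (Hσ n)
  choose βρ γρ hρform hρperp hρdiag using fun m => invariant_form hD (b m) (hbu m) (ρ m) (Hρ m)
  -- diagonal overlap relation
  have hsum : ∀ n m, βρ m + γρ m = βσ n + γσ n := by
    intro n m
    obtain ⟨U, hU1, hU2, hUab⟩ := exists_unitary_mapsto i0 (hau n) (hbu m)
    have h := hdb n m U hU1
    have hUb : Uᴴ *ᵥ b m = a n := by rw [← hUab, mulVec_cancel hU1]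
    have e3 : U * σ n * Uᴴ = (Uᴴ)ᴴ * σ n * Uᴴ := by
      rw [Matrix.conjTranspose_conjTranspose]
    rw [quad_conj U (ρ m), hUab, e3, quad_conj Uᴴ (σ n), hUb, hρdiag m, hσdiag n] at h
    exact h
  -- perpendicular relation
  have hβ : ∀ n m, βρ m = βσ n := by
    intro n m
    obtain ⟨v, hv1, hv2⟩ := exists_perp hD (hbu m)
    obtain ⟨U, hU1, hU2, hUav⟩ := exists_unitary_mapsto i0 (hau n) hv1
    have h := hdb n m U hU1
    have hU2' : (Uᴴ)ᴴ * Uᴴ = 1 := by rw [Matrix.conjTranspose_conjTranspose]; exact hU2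
    have hy1 : star (Uᴴ *ᵥ b m) ⬝ᵥ (Uᴴ *ᵥ b m) = 1 := by rw [quad_norm hU2', hbu]
    have hay : star (a n) ⬝ᵥ (Uᴴ *ᵥ b m) = 0 := by
      rw [Matrix.dotProduct_mulVec, ← Matrix.star_mulVec, hUav, dot_conj, hv2, map_zero]
    have e3 : U * σ n * Uᴴ = (Uᴴ)ᴴ * σ n * Uᴴ := by
      rw [Matrix.conjTranspose_conjTranspose]
    rw [quad_conj U (ρ m), hUav, e3, quad_conj Uᴴ (σ n), hρperp m v hv1 hv2,
      hσperp n _ hy1 hay] at h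
    exact h
  have hγ : ∀ n m, γρ m = γσ n := by
    intro n m
    linear_combination hsum n m - hβ n m
  -- positivity
  have hβ0 : (0:ℂ) ≤ βσ n0 := by
    obtain ⟨v, hv1, hv2⟩ := exists_perp hD (hau n0)
    rw [← hσperp n0 v hv1 hv2]
    exact (hσ n0).dotProduct_mulVec_nonneg v
  have hβγ0 : (0:ℂ) ≤ βσ n0 + γσ n0 := by
    rw [← hσdiag n0]
    exact (hσ n0).dotProduct_mulVec_nonneg (a n0)
  have hβ0' := Complex.le_def.mp hβ0
  have hβγ0' := Complex.le_def.mp hβγ0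
  -- traces
  have trσ : ∀ n, βσ n * D + γσ n = 1 := by
    intro n
    rw [← trace_form (βσ n) (γσ n) (a n) (hau n), ← hσform n, hσtr n]
  have trρ : ∀ m, βρ m * D + γρ m = 1 := by
    intro m
    rw [← trace_form (βρ m) (γρ m) (b m) (hbu m), ← hρform m, hρtr m]
  set α : ℝ := (γσ n0).re with hα
  have hγim : (γσ n0).im = 0 := by
    have h1 : (βσ n0).im = 0 := hβ0'.2.symm
    have h2 : (βσ n0).im + (γσ n0).im = 0 := by
      have := hβγ0'.2.symm
      simpa [Complex.add_im] using this
    linarith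
  have hγc : γσ n0 = (α : ℂ) := Complex.ext rfl (by simpa using hγim)
  have hγσc : ∀ n, γσ n = (α : ℂ) := by
    intro n
    rw [← hγ n m0, hγ n0 m0, hγc]
  have hγρc : ∀ m, γρ m = (α : ℂ) := by
    intro m
    rw [hγ n0 m, hγc]
  have hDC : (D:ℂ) ≠ 0 := Nat.cast_ne_zero.mpr (by omega)
  have hβσc : ∀ n, βσ n = (((1 - α) / D : ℝ) : ℂ) := by
    intro n
    have h := trσ n
    rw [hγσc n] at h
    push_cast
    field_simp
    linear_combination h
  have hβρc : ∀ m, βρ m = (((1 - α) / D : ℝ) : ℂ) := by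
    intro m
    have h := trρ m
    rw [hγρc m] at h
    push_cast
    field_simp
    linear_combination h
  -- bounds
  have hDR : (0:ℝ) < D := by exact_mod_cast hD0
  have hDR2 : (2:ℝ) ≤ D := by exact_mod_cast hD
  have hβre : (βσ n0).re = (1 - α) / D := by rw [hβσc n0, Complex.ofReal_re]
  have hbound1 : α ≤ 1 := by
    have h := hβ0'.1
    rw [hβre] at h
    simp only [Complex.zero_re] at h
    have hc : ((1 - α) / (D:ℝ)) * D = 1 - α := div_mul_cancel₀ _ (ne_of_gt hDR)
    nlinarith [mul_nonneg h hDR.le, hc]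
  have hbound2 : -(1 / ((D : ℝ) - 1)) ≤ α := by
    have h := hβγ0'.1
    rw [Complex.add_re, hβre, hγc, Complex.ofReal_re] at h
    simp only [Complex.zero_re] at h
    have hpos : (0:ℝ) < (D:ℝ) - 1 := by linarith
    rw [show -(1 / ((D:ℝ) - 1)) = (-1) / ((D:ℝ) - 1) by ring, div_le_iff₀ hpos]
    have hc : ((1 - α) / (D:ℝ)) * D = 1 - α := div_mul_cancel₀ _ (ne_of_gt hDR)
    nlinarith [mul_nonneg h hDR.le, hc]
  refine ⟨α, hbound2, hbound1, fun n => ?_, fun m => ?_⟩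
  · rw [hσform n, hβσc n, hγσc n]
  · rw [hρform m, hβρc m, hγρc m]
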